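/- Let A be an n×n real matrix (n ≥ 1) and m ≥ 1. For 0 ≤ i < n, let α_i = max over subsets S of the index set with |S| = n − i of the tropical permanent of A|_S, and let β_i be defined in the same way for the tropical power A^{⊙m}. Then β_i ≥ m · α_i for every i with 0 ≤ i < n. -/

import Mathlib

/-- The tropical (max-plus) product of two `n × n` real matrices:
`(A ⊙ B) i j = max_k (A i k + B k j)`. -/
noncomputable def tropMul {n : ℕ} [NeZero n] (A B : Fin n → Fin n → ℝ) :
    Fin n → Fin n → ℝ :=
  fun i j => Finset.univ.sup' Finset.univ_nonempty fun k => A i k + B k j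

/-- The `m`-th tropical power `A^{⊙m}` of an `n × n` real matrix (meaningful for
`m ≥ 1`; the value at `m = 0` is a junk value). -/
noncomputable def tropPow {n : ℕ} [NeZero n] (A : Fin n → Fin n → ℝ) :
    ℕ → Fin n → Fin n → ℝ
  | 0 => fun _ _ => 0
  | 1 => A
  | m + 2 => tropMul A (tropPow A (m + 1))

/-- The tropical permanent of the principal submatrix of `M` on the index set
`S`: the maximum over permutations `σ` of `S` of `∑_{i ∈ S} M i (σ i)`. -/
noncomputable def tropPermOn {n : ℕ} (M : Fin n → Fin n → ℝ) (S : Finset (Fin n)) : ℝ :=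
  Finset.univ.sup' ⟨Equiv.refl {x // x ∈ S}, Finset.mem_univ _⟩
    fun σ : Equiv.Perm {x // x ∈ S} => ∑ i : {x // x ∈ S}, M (i : Fin n) ((σ i : Fin n))

/-- The coefficient of `x^i` in the tropical characteristic polynomial of `M`:
the maximum of the tropical permanents of all principal `(n−i) × (n−i)` minors. -/
noncomputable def tropCharCoeff {n : ℕ} (M : Fin n → Fin n → ℝ) (i : ℕ) : ℝ :=
  ((Finset.univ : Finset (Fin n)).powersetCard (n - i)).sup'
    (Finset.powersetCard_nonempty.mpr (by simp))
    fun S => tropPermOn M S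

/-!
If `σ` is an optimal permutation of an optimal index set `S` for `A`, then `m` times its weight
is the total weight of the `m`-step walks `j → σ j → ⋯ → σ^m j` for `j ∈ S`. Each such walk
weighs at most the entry `(j, σ^m j)` of `A^{⊙m}`, so the permutation `σ^m` of `S` has
`A^{⊙m}`-weight at least `m · α_i`.
-/

open Finset

section TropicalPower

variable {n : ℕ} [NeZero n]

theorem add_le_tropMul (A B : Fin n → Fin n → ℝ) (i k j : Fin n) :
    A i k + B k j ≤ tropMul A B i j :=
  le_sup' (fun k => A i k + B k j) (mem_univ k)

theorem sum_range_le_tropPow (A : Fin n → Fin n → ℝ) :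
    ∀ (m : ℕ) (f : ℕ → Fin n),
      ∑ k ∈ range m, A (f k) (f (k + 1)) ≤ tropPow A m (f 0) (f m)
  | 0, _ => by simp [tropPow]
  | 1, _ => by simp [tropPow]
  | m + 2, f => by
    rw [sum_range_succ']
    calc ∑ k ∈ range (m + 1), A (f (k + 1)) (f (k + 1 + 1)) + A (f 0) (f (0 + 1))
        ≤ tropPow A (m + 1) (f 1) (f (m + 2)) + A (f 0) (f 1) := by
          gcongr
          exact sum_range_le_tropPow A (m + 1) (fun k => f (k + 1))
      _ ≤ tropPow A (m + 2) (f 0) (f (m + 2)) := by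
          rw [add_comm]
          exact add_le_tropMul A _ _ _ _

end TropicalPower

section TropicalPermanent

variable {n : ℕ}

theorem sum_le_tropPermOn (M : Fin n → Fin n → ℝ) (S : Finset (Fin n)) (σ : Equiv.Perm S) :
    ∑ i : S, M i (σ i) ≤ tropPermOn M S :=
  le_sup' (fun σ : Equiv.Perm S => ∑ i : S, M i (σ i)) (mem_univ σ)

theorem exists_tropPermOn_eq_sum (M : Fin n → Fin n → ℝ) (S : Finset (Fin n)) :
    ∃ σ : Equiv.Perm S, tropPermOn M S = ∑ i : S, M i (σ i) := by
  obtain ⟨σ, -, hσ⟩ := exists_mem_eq_sup' _ (fun σ : Equiv.Perm S => ∑ i : S, M i (σ i))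
  exact ⟨σ, hσ⟩

theorem tropPermOn_le_tropCharCoeff (M : Fin n → Fin n → ℝ) {S : Finset (Fin n)} {i : ℕ}
    (hS : S.card = n - i) : tropPermOn M S ≤ tropCharCoeff M i :=
  le_sup' (fun S => tropPermOn M S) (mem_powersetCard.mpr ⟨subset_univ S, hS⟩)

theorem exists_tropCharCoeff_eq_tropPermOn (M : Fin n → Fin n → ℝ) (i : ℕ) :
    ∃ S : Finset (Fin n), S.card = n - i ∧ tropCharCoeff M i = tropPermOn M S := by
  obtain ⟨S, hS, hS_eq⟩ := exists_mem_eq_sup' _ (fun S => tropPermOn M S)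
  exact ⟨S, (mem_powersetCard.mp hS).2, hS_eq⟩

theorem natCast_mul_sum_eq_sum_sum_range (M : Fin n → Fin n → ℝ) {S : Finset (Fin n)}
    (σ : Equiv.Perm S) (m : ℕ) :
    (m : ℝ) * ∑ j : S, M j (σ j) =
      ∑ j : S, ∑ k ∈ range m, M ((σ ^ k) j) ((σ ^ (k + 1)) j) := by
  rw [sum_comm, ← nsmul_eq_mul, ← card_range m, ← sum_const, card_range]
  refine sum_congr rfl fun k _ => ?_
  rw [← Equiv.sum_comp (σ ^ k)]
  simp only [pow_succ', Equiv.Perm.mul_apply]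

theorem natCast_mul_tropPermOn_le_tropPermOn_tropPow [NeZero n] (A : Fin n → Fin n → ℝ)
    (S : Finset (Fin n)) (m : ℕ) :
    (m : ℝ) * tropPermOn A S ≤ tropPermOn (tropPow A m) S := by
  obtain ⟨σ, hσ⟩ := exists_tropPermOn_eq_sum A S
  calc (m : ℝ) * tropPermOn A S
      = ∑ j : S, ∑ k ∈ range m, A ((σ ^ k) j) ((σ ^ (k + 1)) j) := by
        rw [hσ, natCast_mul_sum_eq_sum_sum_range]
    _ ≤ ∑ j : S, tropPow A m j ((σ ^ m) j) :=
        sum_le_sum fun j _ => by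
          simpa using sum_range_le_tropPow A m (fun k => ((σ ^ k) j : Fin n))
    _ ≤ tropPermOn (tropPow A m) S := sum_le_tropPermOn _ S (σ ^ m)

end TropicalPermanent

theorem tropCharCoeff_tropPow_ge_general {n : ℕ} [NeZero n] (A : Fin n → Fin n → ℝ)
    (m : ℕ) (i : ℕ) :
    tropCharCoeff (tropPow A m) i ≥ (m : ℝ) * tropCharCoeff A i := by
  obtain ⟨S, hS, hS_eq⟩ := exists_tropCharCoeff_eq_tropPermOn A i
  rw [hS_eq]
  exact (natCast_mul_tropPermOn_le_tropPermOn_tropPow A S m).trans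
    (tropPermOn_le_tropCharCoeff _ hS)

/-- Max-plus form of Theorem 3.6, coefficientwise: for `0 ≤ i < n`, the
coefficient `β_i` of the tropical characteristic polynomial of `A^{⊙m}`
dominates `m` times the corresponding coefficient `α_i` of that of `A`. -/
theorem tropCharCoeff_tropPow_ge {n : ℕ} [NeZero n] (A : Fin n → Fin n → ℝ)
    (m : ℕ) (hm : 1 ≤ m) (i : ℕ) (hi : i < n) :
    tropCharCoeff (tropPow A m) i ≥ (m : ℝ) * tropCharCoeff A i :=
  tropCharCoeff_tropPow_ge_general A m i
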